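/- Assume d^* < ∞, and suppose there are constants C₀, C₁ > 0 such that (1/d_k)∫_{Δ_k} q_−(x) dx ≤ C₀ for all k and (1/β_k)^− ≤ C₁ · min{d_k, d_{k+1}} for all k. Then the form t_{X,β,q} is lower semibounded: there exists C ≥ 0 such that t_{X,β,q}[f] ≥ −C ∫₀^∞ |f(x)|² dx for every f in the domain of t_{X,β,q}. -/

import Mathlib

open MeasureTheory Set Filter

noncomputable section

/-- A function that is *piecewise `H¹`* with respect to the partition points
`x 0 < x 1 < x 2 < ⋯` of `[0,∞)`: on each interval `Δ_{k+1} = [x k, x (k+1)]` it is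
absolutely continuous with derivative `f' ∈ L²`, encoded via the fundamental
theorem of calculus; `fr k = f(x k +)` and `fl (k+1) = f(x (k+1) −)` are the
one-sided limits at the nodes. -/
structure PW1 (x : ℕ → ℝ) where
  f : ℝ → ℝ
  f' : ℝ → ℝ
  fr : ℕ → ℝ
  fl : ℕ → ℝ
  int_d : ∀ k, IntegrableOn f' (Icc (x k) (x (k + 1))) volume
  sq_d : ∀ k, IntegrableOn (fun t => f' t ^ 2) (Icc (x k) (x (k + 1))) volume
  ftc : ∀ k, ∀ t ∈ Ioo (x k) (x (k + 1)), f t = fr k + ∫ s in Ioc (x k) t, f' s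
  fl_eq : ∀ k, fl (k + 1) = fr k + ∫ s in Ioc (x k) (x (k + 1)), f' s

/-- The jump `f(x_{k+1}+) − f(x_{k+1}−)` of a piecewise `H¹` function at the
interior node `x (k+1)` (the paper's node `x_{k+1}`). -/
def PW1.jump {x : ℕ → ℝ} (F : PW1 x) (k : ℕ) : ℝ := F.fr (k + 1) - F.fl (k + 1)

/-- Membership in the domain of the form `t_{X,β,q}`: `f ∈ L²(0,∞)`,
`∫₀^∞ |f'|² < ∞`, `∫₀^∞ |q| |f|² < ∞` and `Σ_k |f(x_k+) − f(x_k−)|²/|β_k| < ∞`. -/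
def MemDom (x : ℕ → ℝ) (q : ℝ → ℝ) (β : ℕ → ℝ) (F : PW1 x) : Prop :=
  IntegrableOn (fun t => F.f t ^ 2) (Ioi 0) volume ∧
  IntegrableOn (fun t => F.f' t ^ 2) (Ioi 0) volume ∧
  IntegrableOn (fun t => |q t| * F.f t ^ 2) (Ioi 0) volume ∧
  Summable (fun k => F.jump k ^ 2 / |β (k + 1)|)

/-- The value of the quadratic form
`t_{X,β,q}[f] = ∫₀^∞ (|f'|² + q |f|²) dx + Σ_k |f(x_k+) − f(x_k−)|²/β_k`. -/
def formVal (x : ℕ → ℝ) (q : ℝ → ℝ) (β : ℕ → ℝ) (F : PW1 x) : ℝ :=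
  (∫ t in Ioi (0 : ℝ), (F.f' t ^ 2 + q t * F.f t ^ 2)) +
    ∑' k, F.jump k ^ 2 / β (k + 1)

/-!
On a cell `Δ` of length `d ≤ D`, Cauchy–Schwarz gives `f(t)² ≤ 2 f(s)² + 2 |t - s| ∫_Δ |f'|²`;
averaging over `s` in a window of length `min ε d` around `t` bounds `d · f(t)²`, including at
the one-sided limits at the ends of `Δ`, by
`E_Δ = 2 ε D ∫_Δ |f'|² + 2 (D / ε + 1) ∫_Δ |f|²`.
Hence `∫_Δ q₋ |f|² ≤ (∫_Δ q₋) sup_Δ |f|² ≤ C₀ E_Δ`, and a negative coupling at `x_k` costs at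
most `C₁ min(d_k, d_{k+1}) · 2 (f(x_k-)² + f(x_k+)²) ≤ 2 C₁ (E_{Δ_k} + E_{Δ_{k+1}})`.
Summing over the cells, the negative part of the form is at most
`(C₀ + 4 C₁) (2 ε D ∫ |f'|² + 2 (D / ε + 1) ∫ |f|²)`, and for `ε = 1 / (2 D (C₀ + 4 C₁))` the
term `∫ |f'|²` of the form absorbs the derivative part.
-/

theorem sq_setIntegral_le_measureReal_mul {α : Type*} [MeasurableSpace α] {μ : Measure α}
    {s : Set α} {f : α → ℝ} (hs : μ s ≠ ⊤) (hf : IntegrableOn f s μ)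
    (hf2 : IntegrableOn (fun a => f a ^ 2) s μ) :
    (∫ a in s, f a ∂μ) ^ 2 ≤ μ.real s * ∫ a in s, f a ^ 2 ∂μ := by
  by_cases h0 : μ s = 0
  · simp [Measure.restrict_eq_zero.2 h0]
  have hpos : 0 < μ.real s := ENNReal.toReal_pos h0 hs
  have jensen := even_two.convexOn_pow.map_set_average_le (continuous_pow 2).continuousOn
    isClosed_univ h0 hs (ae_of_all _ fun a => mem_univ (f a)) hf hf2
  simp only [setAverage_eq, smul_eq_mul] at jensen
  rw [mul_pow, inv_pow, ← div_eq_inv_mul, div_le_iff₀ (pow_pos hpos 2)] at jensen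
  calc _ ≤ (μ.real s)⁻¹ * (∫ a in s, f a ^ 2 ∂μ) * μ.real s ^ 2 := jensen
    _ = _ := by field_simp

theorem iUnion_Ioc_eq_Ioi_of_tendsto_atTop {x : ℕ → ℝ} (hx : Monotone x)
    (hxtop : Tendsto x atTop atTop) : ⋃ k, Ioc (x k) (x (k + 1)) = Ioi (x 0) := by
  simpa using iUnion_Ioc_map_succ_eq_Ioi (fun k => hx (Nat.zero_le k))
    (not_bddAbove_of_tendsto_atTop hxtop)

theorem hasSum_setIntegral_Ioc_of_tendsto_atTop {E : Type*} [NormedAddCommGroup E]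
    [NormedSpace ℝ E] {μ : Measure ℝ} {x : ℕ → ℝ} (hx : Monotone x)
    (hxtop : Tendsto x atTop atTop) {g : ℝ → E} (hg : IntegrableOn g (Ioi (x 0)) μ) :
    HasSum (fun k => ∫ t in Ioc (x k) (x (k + 1)), g t ∂μ)
      (∫ t in Ioi (x 0), g t ∂μ) := by
  rw [← iUnion_Ioc_eq_Ioi_of_tendsto_atTop hx hxtop] at hg ⊢
  exact hasSum_integral_iUnion (fun _ => measurableSet_Ioc)
    (by simpa using hx.pairwise_disjoint_on_Ioc_succ) hg

theorem sq_intervalIntegral_le_abs_sub_mul {g : ℝ → ℝ} {a b s t : ℝ}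
    (hg : IntegrableOn g (Icc a b)) (hg2 : IntegrableOn (fun u => g u ^ 2) (Icc a b))
    (hs : s ∈ Icc a b) (ht : t ∈ Icc a b) :
    (∫ u in s..t, g u) ^ 2 ≤ |t - s| * ∫ u in Icc a b, g u ^ 2 := by
  wlog hst : s ≤ t generalizing s t
  · simpa [intervalIntegral.integral_symm s t, abs_sub_comm] using this ht hs (le_of_not_ge hst)
  have hsub : Ioc s t ⊆ Icc a b := Ioc_subset_Icc_self.trans (Icc_subset_Icc hs.1 ht.2)
  rw [intervalIntegral.integral_of_le hst, abs_of_nonneg (sub_nonneg.2 hst)]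
  calc (∫ u in Ioc s t, g u) ^ 2 ≤ volume.real (Ioc s t) * ∫ u in Ioc s t, g u ^ 2 :=
        sq_setIntegral_le_measureReal_mul measure_Ioc_lt_top.ne (hg.mono_set hsub)
          (hg2.mono_set hsub)
    _ ≤ (t - s) * ∫ u in Icc a b, g u ^ 2 := by
        rw [Real.volume_real_Ioc_of_le hst]
        exact mul_le_mul_of_nonneg_left (setIntegral_mono_set hg2
          (ae_of_all _ fun u => sq_nonneg (g u)) hsub.eventuallyLE) (sub_nonneg.2 hst)

theorem mul_sq_le_of_sq_sub_le {g : ℝ → ℝ} {a b h t A : ℝ} (hh : 0 < h) (hhab : h ≤ b - a)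
    (hA : 0 ≤ A) (hg2 : IntegrableOn (fun s => g s ^ 2) (Icc a b)) (ht : t ∈ Icc a b)
    (hinc : ∀ s ∈ Icc a b, (g t - g s) ^ 2 ≤ |t - s| * A) :
    h * g t ^ 2 ≤ 2 * (∫ s in Icc a b, g s ^ 2) + 2 * h ^ 2 * A := by
  set u := min t (b - h)
  have hwin : Icc u (u + h) ⊆ Icc a b := Icc_subset_Icc (le_min ht.1 (by linarith))
    (by have := min_le_right t (b - h); linarith)
  have htu : t ∈ Icc u (u + h) := ⟨min_le_left _ _, by
    rcases min_cases t (b - h) with ⟨hu, -⟩ | ⟨hu, -⟩ <;> simp only [u, hu] <;>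
      linarith [ht.2]⟩
  have hpt : ∀ s ∈ Icc u (u + h), g t ^ 2 ≤ 2 * g s ^ 2 + 2 * h * A := fun s hs => by
    have hts : |t - s| ≤ h :=
      abs_sub_le_iff.2 ⟨by linarith [htu.2, hs.1], by linarith [htu.1, hs.2]⟩
    nlinarith [hinc s (hwin hs), sq_nonneg (g t - 2 * g s), mul_le_mul_of_nonneg_right hts hA]
  have hint : IntegrableOn (fun s => 2 * g s ^ 2 + 2 * h * A) (Icc u (u + h)) :=
    ((hg2.mono_set hwin).const_mul 2).add (integrableOn_const measure_Icc_lt_top.ne)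
  have hvol : volume.real (Icc u (u + h)) = h := by
    rw [Real.volume_real_Icc_of_le (by linarith)]; ring
  calc h * g t ^ 2 = ∫ _ in Icc u (u + h), g t ^ 2 := by simp [hvol]
    _ ≤ ∫ s in Icc u (u + h), (2 * g s ^ 2 + 2 * h * A) :=
        setIntegral_mono_on (integrableOn_const measure_Icc_lt_top.ne) hint
          measurableSet_Icc hpt
    _ = 2 * (∫ s in Icc u (u + h), g s ^ 2) + 2 * h ^ 2 * A := by
        rw [integral_add ((hg2.mono_set hwin).const_mul 2)
          (integrableOn_const measure_Icc_lt_top.ne), integral_const_mul]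
        simp [hvol]; ring
    _ ≤ 2 * (∫ s in Icc a b, g s ^ 2) + 2 * h ^ 2 * A := by
        gcongr 2 * ?_ + _
        exact setIntegral_mono_set hg2 (ae_of_all _ fun s => sq_nonneg (g s)) hwin.eventuallyLE

theorem sub_mul_sq_le_of_sq_sub_le {g : ℝ → ℝ} {a b t A D ε : ℝ} (hab : a < b)
    (hD : b - a ≤ D) (hε : 0 < ε) (hA : 0 ≤ A)
    (hg2 : IntegrableOn (fun s => g s ^ 2) (Icc a b))
    (ht : t ∈ Icc a b) (hinc : ∀ s ∈ Icc a b, (g t - g s) ^ 2 ≤ |t - s| * A) :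
    (b - a) * g t ^ 2 ≤ 2 * ε * D * A + 2 * (D / ε + 1) * ∫ s in Icc a b, g s ^ 2 := by
  set B := ∫ s in Icc a b, g s ^ 2
  have hB : 0 ≤ B := setIntegral_nonneg measurableSet_Icc fun s _ => sq_nonneg (g s)
  set h := min ε (b - a)
  have hh : 0 < h := lt_min hε (sub_pos.2 hab)
  have hwin := mul_sq_le_of_sq_sub_le hh (min_le_right _ _) hA hg2 ht hinc
  have hlen : (b - a) * h ≤ ε * D := by
    nlinarith [min_le_left ε (b - a), min_le_right ε (b - a)]
  have hcov : b - a ≤ h * (D / ε + 1) := by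
    rcases min_cases ε (b - a) with ⟨hh', -⟩ | ⟨hh', -⟩ <;> simp only [h, hh']
    · field_simp; linarith
    · nlinarith [div_nonneg (show 0 ≤ D by linarith) hε.le]
  refine le_of_mul_le_mul_left ?_ hh
  nlinarith [mul_le_mul_of_nonneg_left hwin (sub_pos.2 hab).le,
    mul_le_mul_of_nonneg_right hlen (mul_nonneg (sq_nonneg h) hA),
    mul_le_mul_of_nonneg_right hcov hB]

namespace PW1

variable {x : ℕ → ℝ} (F : PW1 x)

/-- The representative of `F` on the closed cell `[x k, x (k + 1)]` that takes the one-sided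
limits `F.fr k`, `F.fl (k + 1)` at its endpoints. -/
def cellExt (k : ℕ) (t : ℝ) : ℝ := F.fr k + ∫ s in x k..t, F.f' s

def cellEnergy (D ε : ℝ) (k : ℕ) : ℝ :=
  2 * ε * D * (∫ t in Ioc (x k) (x (k + 1)), F.f' t ^ 2) +
    2 * (D / ε + 1) * ∫ t in Ioc (x k) (x (k + 1)), F.f t ^ 2

theorem cellExt_left (k : ℕ) : F.cellExt k (x k) = F.fr k := by
  simp [cellExt]

theorem cellExt_right {k : ℕ} (hk : x k ≤ x (k + 1)) :
    F.cellExt k (x (k + 1)) = F.fl (k + 1) := by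
  rw [F.fl_eq, cellExt, intervalIntegral.integral_of_le hk]

theorem cellExt_eq {k : ℕ} {t : ℝ} (ht : t ∈ Ioo (x k) (x (k + 1))) :
    F.cellExt k t = F.f t := by
  rw [F.ftc k t ht, cellExt, intervalIntegral.integral_of_le ht.1.le]

theorem cellExt_sub {k : ℕ} {s t : ℝ} (hs : s ∈ Icc (x k) (x (k + 1)))
    (ht : t ∈ Icc (x k) (x (k + 1))) : F.cellExt k t - F.cellExt k s = ∫ u in s..t, F.f' u := by
  have hint : ∀ u ∈ Icc (x k) (x (k + 1)), IntervalIntegrable F.f' volume (x k) u :=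
    fun u hu => ((F.int_d k).mono_set
      (uIcc_subset_Icc (left_mem_Icc.2 (hu.1.trans hu.2)) hu)).intervalIntegrable
  rw [cellExt, cellExt, add_sub_add_left_eq_sub,
    intervalIntegral.integral_interval_sub_left (hint t ht) (hint s hs)]

theorem cellEnergy_nonneg {D ε : ℝ} (hD : 0 ≤ D) (hε : 0 < ε) (k : ℕ) :
    0 ≤ F.cellEnergy D ε k := by
  unfold cellEnergy
  have := setIntegral_nonneg (μ := volume) (measurableSet_Ioc (a := x k) (b := x (k + 1)))
    fun t _ => sq_nonneg (F.f' t)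
  have := setIntegral_nonneg (μ := volume) (measurableSet_Ioc (a := x k) (b := x (k + 1)))
    fun t _ => sq_nonneg (F.f t)
  positivity

theorem sub_mul_sq_cellExt_le {k : ℕ} {D ε t : ℝ} (hk : x k < x (k + 1))
    (hD : x (k + 1) - x k ≤ D) (hε : 0 < ε)
    (hf2 : IntegrableOn (fun t => F.f t ^ 2) (Ioc (x k) (x (k + 1))))
    (ht : t ∈ Icc (x k) (x (k + 1))) :
    (x (k + 1) - x k) * F.cellExt k t ^ 2 ≤ F.cellEnergy D ε k := by
  have heq : EqOn (fun s => F.cellExt k s ^ 2) (fun s => F.f s ^ 2) (Ioo (x k) (x (k + 1))) :=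
    fun s hs => by simp only [F.cellExt_eq hs]
  have hg2 : IntegrableOn (fun s => F.cellExt k s ^ 2) (Icc (x k) (x (k + 1))) :=
    (integrableOn_Icc_iff_integrableOn_Ioo ..).mpr
      ((hf2.mono_set Ioo_subset_Ioc_self).congr_fun heq.symm measurableSet_Ioo)
  have hB : ∫ s in Icc (x k) (x (k + 1)), F.cellExt k s ^ 2 =
      ∫ s in Ioc (x k) (x (k + 1)), F.f s ^ 2 := by
    rw [integral_Icc_eq_integral_Ioo, integral_Ioc_eq_integral_Ioo]
    exact setIntegral_congr_fun measurableSet_Ioo heq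
  have hbound := sub_mul_sq_le_of_sq_sub_le hk hD hε
    (setIntegral_nonneg measurableSet_Icc fun s _ => sq_nonneg (F.f' s)) hg2 ht
    fun s hs => by
      rw [F.cellExt_sub hs ht]
      exact sq_intervalIntegral_le_abs_sub_mul (F.int_d k) (F.sq_d k) hs ht
  rwa [hB, integral_Icc_eq_integral_Ioc] at hbound

theorem setIntegral_negPart_mul_sq_le {k : ℕ} {D ε C₀ : ℝ} {q : ℝ → ℝ}
    (hk : x k < x (k + 1)) (hD : x (k + 1) - x k ≤ D) (hε : 0 < ε)
    (hf2 : IntegrableOn (fun t => F.f t ^ 2) (Ioc (x k) (x (k + 1))))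
    (hq : IntegrableOn q (Icc (x k) (x (k + 1))))
    (hqneg : (1 / (x (k + 1) - x k)) * (∫ t in Icc (x k) (x (k + 1)), max 0 (-q t)) ≤ C₀) :
    ∫ t in Ioc (x k) (x (k + 1)), max 0 (-q t) * F.f t ^ 2 ≤ C₀ * F.cellEnergy D ε k := by
  set d := x (k + 1) - x k
  have hd : 0 < d := sub_pos.2 hk
  set E := F.cellEnergy D ε k
  have hE : 0 ≤ E := F.cellEnergy_nonneg (hd.le.trans hD) hε k
  have hsup : ∀ t ∈ Ioo (x k) (x (k + 1)), F.f t ^ 2 ≤ E / d := fun t ht => by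
    rw [le_div_iff₀' hd, ← F.cellExt_eq ht]
    exact F.sub_mul_sq_cellExt_le hk hD hε hf2 (Ioo_subset_Icc_self ht)
  have hqn : IntegrableOn (fun t => max 0 (-q t)) (Icc (x k) (x (k + 1))) :=
    (integrable_const 0).sup hq.neg
  have hmass : ∫ t in Icc (x k) (x (k + 1)), max 0 (-q t) ≤ C₀ * d := by
    rwa [one_div_mul_eq_div, div_le_iff₀ hd] at hqneg
  calc ∫ t in Ioc (x k) (x (k + 1)), max 0 (-q t) * F.f t ^ 2
      = ∫ t in Ioo (x k) (x (k + 1)), max 0 (-q t) * F.f t ^ 2 := integral_Ioc_eq_integral_Ioo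
    _ ≤ ∫ t in Ioo (x k) (x (k + 1)), max 0 (-q t) * (E / d) :=
        integral_mono_of_nonneg (ae_of_all _ fun t => by positivity)
          ((hqn.mono_set Ioo_subset_Icc_self).mul_const _)
          (ae_restrict_of_forall_mem measurableSet_Ioo fun t ht =>
            mul_le_mul_of_nonneg_left (hsup t ht) (le_max_left _ _))
    _ = (∫ t in Icc (x k) (x (k + 1)), max 0 (-q t)) * (E / d) := by
        rw [integral_mul_const, integral_Icc_eq_integral_Ioo]
    _ ≤ C₀ * d * (E / d) := by gcongr
    _ = C₀ * E := by field_simp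

theorem min_mul_jump_sq_le {k : ℕ} {D ε : ℝ} (hx : StrictMono x)
    (hD : ∀ k, x (k + 1) - x k ≤ D) (hε : 0 < ε)
    (hf2 : ∀ k, IntegrableOn (fun t => F.f t ^ 2) (Ioc (x k) (x (k + 1)))) :
    min (x (k + 1) - x k) (x (k + 2) - x (k + 1)) * F.jump k ^ 2 ≤
      2 * (F.cellEnergy D ε k + F.cellEnergy D ε (k + 1)) := by
  have hk := hx (Nat.lt_succ_self k)
  have hk' := hx (Nat.lt_succ_self (k + 1))
  have hleft := F.sub_mul_sq_cellExt_le hk (hD k) hε (hf2 k) (right_mem_Icc.2 hk.le)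
  have hright :=
    F.sub_mul_sq_cellExt_le hk' (hD (k + 1)) hε (hf2 (k + 1)) (left_mem_Icc.2 hk'.le)
  rw [F.cellExt_right hk.le] at hleft
  rw [F.cellExt_left] at hright
  set m := min (x (k + 1) - x k) (x (k + 2) - x (k + 1))
  calc m * F.jump k ^ 2 ≤ m * (2 * F.fl (k + 1) ^ 2 + 2 * F.fr (k + 1) ^ 2) := by
        gcongr; unfold jump; nlinarith [sq_nonneg (F.fr (k + 1) + F.fl (k + 1))]
    _ ≤ 2 * ((x (k + 1) - x k) * F.fl (k + 1) ^ 2) +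
          2 * ((x (k + 2) - x (k + 1)) * F.fr (k + 1) ^ 2) := by
        have := mul_le_mul_of_nonneg_right (min_le_left _ _ : m ≤ _) (sq_nonneg (F.fl (k + 1)))
        have := mul_le_mul_of_nonneg_right (min_le_right _ _ : m ≤ _) (sq_nonneg (F.fr (k + 1)))
        linarith
    _ ≤ 2 * (F.cellEnergy D ε k + F.cellEnergy D ε (k + 1)) := by linarith

theorem hasSum_cellEnergy (hx0 : x 0 = 0) (hx : Monotone x) (hxtop : Tendsto x atTop atTop)
    (hf2 : IntegrableOn (fun t => F.f t ^ 2) (Ioi 0))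
    (hf'2 : IntegrableOn (fun t => F.f' t ^ 2) (Ioi 0)) (D ε : ℝ) :
    HasSum (F.cellEnergy D ε) (2 * ε * D * (∫ t in Ioi (0 : ℝ), F.f' t ^ 2) +
      2 * (D / ε + 1) * ∫ t in Ioi (0 : ℝ), F.f t ^ 2) := by
  rw [← hx0] at hf2 hf'2 ⊢
  exact ((hasSum_setIntegral_Ioc_of_tendsto_atTop hx hxtop hf'2).mul_left _).add
    ((hasSum_setIntegral_Ioc_of_tendsto_atTop hx hxtop hf2).mul_left _)

theorem integral_negPart_mul_sq_le {q : ℝ → ℝ} {D ε C₀ S : ℝ} (hx0 : x 0 = 0)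
    (hx : StrictMono x) (hxtop : Tendsto x atTop atTop)
    (hq : ∀ k, IntegrableOn q (Icc (x k) (x (k + 1)))) (hD : ∀ k, x (k + 1) - x k ≤ D)
    (hε : 0 < ε)
    (hqneg : ∀ k, (1 / (x (k + 1) - x k)) *
      (∫ t in Icc (x k) (x (k + 1)), max 0 (-q t)) ≤ C₀)
    (hf2 : ∀ k, IntegrableOn (fun t => F.f t ^ 2) (Ioc (x k) (x (k + 1))))
    (hqf2 : IntegrableOn (fun t => max 0 (-q t) * F.f t ^ 2) (Ioi 0))
    (hE : HasSum (F.cellEnergy D ε) S) :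
    ∫ t in Ioi (0 : ℝ), max 0 (-q t) * F.f t ^ 2 ≤ C₀ * S := by
  have hcells := hasSum_setIntegral_Ioc_of_tendsto_atTop hx.monotone hxtop (hx0 ▸ hqf2)
  rw [hx0] at hcells
  exact hasSum_le (fun k => F.setIntegral_negPart_mul_sq_le (hx (Nat.lt_succ_self k)) (hD k) hε
    (hf2 k) (hq k) (hqneg k)) hcells (hE.mul_left C₀)

theorem neg_le_tsum_jump_sq_div {β : ℕ → ℝ} {D ε C₁ S : ℝ} (hx : StrictMono x)
    (hD : ∀ k, x (k + 1) - x k ≤ D) (hε : 0 < ε) (hC₁ : 0 ≤ C₁)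
    (hbneg : ∀ k, max 0 (-(β (k + 1))⁻¹) ≤
      C₁ * min (x (k + 1) - x k) (x (k + 2) - x (k + 1)))
    (hf2 : ∀ k, IntegrableOn (fun t => F.f t ^ 2) (Ioc (x k) (x (k + 1))))
    (hjump : Summable fun k => F.jump k ^ 2 / |β (k + 1)|)
    (hE : HasSum (F.cellEnergy D ε) S) :
    -(4 * C₁ * S) ≤ ∑' k, F.jump k ^ 2 / β (k + 1) := by
  set E := F.cellEnergy D ε
  have hE0 : 0 ≤ E 0 :=
    F.cellEnergy_nonneg ((sub_pos.2 (hx (Nat.lt_succ_self 0))).le.trans (hD 0)) hε 0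
  have hpairs : HasSum (fun k => E k + E (k + 1)) (2 * S - E 0) := by
    simpa [two_mul, add_sub_assoc] using hE.add ((hasSum_nat_add_iff' 1).2 hE)
  have hterm : ∀ k, -(2 * C₁ * (E k + E (k + 1))) ≤ F.jump k ^ 2 / β (k + 1) := fun k => by
    have hmin := mul_le_mul_of_nonneg_left (F.min_mul_jump_sq_le (k := k) hx hD hε hf2) hC₁
    have hneg := mul_le_mul_of_nonneg_right (hbneg k) (sq_nonneg (F.jump k))
    have hinv : -max 0 (-(β (k + 1))⁻¹) ≤ (β (k + 1))⁻¹ := neg_le.1 (le_max_right _ _)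
    rw [div_eq_inv_mul]
    nlinarith [mul_le_mul_of_nonneg_right hinv (sq_nonneg (F.jump k))]
  have hsum : Summable fun k => F.jump k ^ 2 / β (k + 1) :=
    Summable.of_norm (by simpa [abs_div] using hjump)
  have := hasSum_le hterm (hpairs.mul_left (2 * C₁)).neg hsum.hasSum
  nlinarith

theorem sub_le_formVal {q : ℝ → ℝ} {β : ℕ → ℝ} {D ε C₀ C₁ S : ℝ} (hx0 : x 0 = 0)
    (hx : StrictMono x) (hxtop : Tendsto x atTop atTop)
    (hq : ∀ k, IntegrableOn q (Icc (x k) (x (k + 1)))) (hD : ∀ k, x (k + 1) - x k ≤ D)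
    (hε : 0 < ε) (hC₁ : 0 ≤ C₁)
    (hqneg : ∀ k, (1 / (x (k + 1) - x k)) *
      (∫ t in Icc (x k) (x (k + 1)), max 0 (-q t)) ≤ C₀)
    (hbneg : ∀ k, max 0 (-(β (k + 1))⁻¹) ≤
      C₁ * min (x (k + 1) - x k) (x (k + 2) - x (k + 1)))
    (hF : MemDom x q β F) (hE : HasSum (F.cellEnergy D ε) S) :
    (∫ t in Ioi (0 : ℝ), F.f' t ^ 2) - (C₀ + 4 * C₁) * S ≤ formVal x q β F := by
  obtain ⟨hf2, hf'2, hqf2, hjump⟩ := hF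
  have hcell : ∀ k, Ioc (x k) (x (k + 1)) ⊆ Ioi 0 := fun k t ht =>
    (hx0 ▸ hx.monotone (Nat.zero_le k)).trans_lt ht.1
  have hqm : AEStronglyMeasurable q (volume.restrict (Ioi 0)) := by
    rw [← hx0, ← iUnion_Ioc_eq_Ioi_of_tendsto_atTop hx.monotone hxtop,
      aestronglyMeasurable_iUnion_iff]
    exact fun k => ((hq k).mono_set Ioc_subset_Icc_self).aestronglyMeasurable
  have hqf : IntegrableOn (fun t => q t * F.f t ^ 2) (Ioi 0) :=
    hqf2.mono' (hqm.mul hf2.aestronglyMeasurable) (ae_of_all _ fun t => by simp)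
  have hqnf : IntegrableOn (fun t => max 0 (-q t) * F.f t ^ 2) (Ioi 0) :=
    hqf2.mono' ((aestronglyMeasurable_const.sup hqm.neg).mul hf2.aestronglyMeasurable)
      (ae_of_all _ fun t => by
        rw [Real.norm_eq_abs, abs_mul, abs_of_nonneg (le_max_left _ _), abs_sq]
        gcongr
        exact max_le (abs_nonneg _) (neg_le_abs _))
  have hpot : -∫ t in Ioi (0 : ℝ), max 0 (-q t) * F.f t ^ 2 ≤
      ∫ t in Ioi (0 : ℝ), q t * F.f t ^ 2 := by
    rw [← integral_neg]
    refine integral_mono hqnf.neg hqf fun t => ?_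
    nlinarith [le_max_right 0 (-q t), sq_nonneg (F.f t)]
  have hcells := fun k => hf2.mono_set (hcell k)
  have hqS := F.integral_negPart_mul_sq_le hx0 hx hxtop hq hD hε hqneg hcells hqnf hE
  have hjS := F.neg_le_tsum_jump_sq_div hx hD hε hC₁ hbneg hcells hjump hE
  rw [formVal, integral_add hf'2 hqf]
  linarith

end PW1

theorem stmt_3_general (x : ℕ → ℝ) (hx0 : x 0 = 0) (hmono : StrictMono x)
    (hxtop : Tendsto x atTop atTop)
    (q : ℝ → ℝ) (hq : ∀ a b : ℝ, 0 ≤ a → IntegrableOn q (Icc a b) volume)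
    (β : ℕ → ℝ)
    (D : ℝ) (hD : ∀ k, x (k + 1) - x k ≤ D)
    (C₀ C₁ : ℝ) (hC₀ : 0 < C₀) (hC₁ : 0 < C₁)
    (hqneg : ∀ k, (1 / (x (k + 1) - x k)) *
      (∫ t in Icc (x k) (x (k + 1)), max 0 (-q t)) ≤ C₀)
    (hbneg : ∀ k, max 0 (-(β (k + 1))⁻¹) ≤
      C₁ * min (x (k + 1) - x k) (x (k + 2) - x (k + 1))) :
    ∃ C : ℝ, 0 ≤ C ∧ ∀ F : PW1 x, MemDom x q β F →
      formVal x q β F ≥ -C * ∫ t in Ioi (0 : ℝ), F.f t ^ 2 := by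
  have hD0 : 0 < D := (sub_pos.2 (hmono (Nat.lt_succ_self 0))).trans_le (hD 0)
  set K := C₀ + 4 * C₁
  have hK : 0 < K := by positivity
  obtain ⟨ε, hε, hεK⟩ : ∃ ε > 0, 2 * ε * D * K = 1 :=
    ⟨1 / (2 * D * K), by positivity, by field_simp⟩
  refine ⟨2 * K * (D / ε + 1), by positivity, fun F hF => ?_⟩
  have hbound := F.sub_le_formVal hx0 hmono hxtop
    (fun k => hq _ _ (hx0 ▸ hmono.monotone (Nat.zero_le k))) hD hε hC₁.le hqneg hbneg hF
    (F.hasSum_cellEnergy hx0 hmono.monotone hxtop hF.1 hF.2.1 D ε)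
  linear_combination hbound + (∫ t in Ioi (0 : ℝ), F.f' t ^ 2) * hεK

/-- **Proposition 2.5(i)**: if `d^* < ∞`, `(1/d_k) ∫_Δₖ q₋ ≤ C₀` and
`(1/β_k)⁻ ≤ C₁ min(d_k, d_{k+1})` for all `k`, then the form `t_{X,β,q}` is
lower semibounded. -/
theorem stmt_3 (x : ℕ → ℝ) (hx0 : x 0 = 0) (hmono : StrictMono x)
    (hxtop : Tendsto x atTop atTop)
    (q : ℝ → ℝ) (hq : ∀ a b : ℝ, 0 ≤ a → IntegrableOn q (Icc a b) volume)
    (β : ℕ → ℝ) (hβ : ∀ k, β (k + 1) ≠ 0)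
    (D : ℝ) (hD : ∀ k, x (k + 1) - x k ≤ D)
    (C₀ C₁ : ℝ) (hC₀ : 0 < C₀) (hC₁ : 0 < C₁)
    (hqneg : ∀ k, (1 / (x (k + 1) - x k)) *
      (∫ t in Icc (x k) (x (k + 1)), max 0 (-q t)) ≤ C₀)
    (hbneg : ∀ k, max 0 (-(β (k + 1))⁻¹) ≤
      C₁ * min (x (k + 1) - x k) (x (k + 2) - x (k + 1))) :
    ∃ C : ℝ, 0 ≤ C ∧ ∀ F : PW1 x, MemDom x q β F →
      formVal x q β F ≥ -C * ∫ t in Ioi (0 : ℝ), F.f t ^ 2 :=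
  stmt_3_general x hx0 hmono hxtop q hq β D hD C₀ C₁ hC₀ hC₁ hqneg hbneg

end
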